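/- arXiv:2010.03796 — 2 statements merged into one kernel-verified Lean document; each statement's English description precedes it below -/
import Mathlib

section
/- There is a constant c > 0 such that for every real number x' with x' ≥ 1 one has ∫_{1/b}^∞ V'(r) / ( V'(r)² + (U'(r) - x')² ) dr ≥ c · (x')^{-1 + 1/γ}. -/
/-!
Put `F r = (ζ + r) ^ γ` with `Im ζ = 1` and `ρ r = ‖ζ + r‖ ≥ 1`. Far to the right
`γ · arg (ζ + r) ≤ π / 3`, so `Re F ≥ ρ ^ γ / 2` and `Im F ≍ γ ρ ^ (γ - 1) ≍ ‖F'‖`.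
By the intermediate value theorem there is `p` with `Re F p` within bounded distance of `x` and
`ρ p ^ γ ≲ x`; on `[p, p + 1]` both `Im F` and `|Re F - x|` are then of size `ρ p ^ (γ - 1)`, so the
integrand is `≳ ρ p ^ (1 - γ) ≳ x ^ (-1 + 1 / γ)`. It is nonnegative because
`0 < γ · arg (ζ + r) < γ · arg ζ = π` for `r > 0`, and integrable because it decays like
`r ^ (-γ - 1)`.
-/

open Complex MeasureTheory Real Set Filter Topology Asymptotics

namespace Complex

lemma arg_ofReal_add_I (x : ℝ) : arg ((x : ℂ) + I) = π / 2 - Real.arctan x := by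
  have hre : ((x : ℂ) + I).re = x := by simp
  have hnorm : ‖(x : ℂ) + I‖ = √(1 + x ^ 2) := by simpa [add_comm] using norm_add_mul_I x 1
  rw [arg_of_im_pos (by simp), hnorm, hre, ← Real.sin_arctan,
    ← Real.cos_pi_div_two_sub, arccos_cos] <;>
  linarith [arctan_lt_pi_div_two x, neg_pi_div_two_lt_arctan x]

lemma arg_eq_pi_div_two_sub_arctan {z : ℂ} (hz : z.im = 1) :
    arg z = π / 2 - Real.arctan z.re := by
  rw [← arg_ofReal_add_I]
  congr 1
  apply Complex.ext <;> simp [hz]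

lemma arg_le_pi_div_two_mul_im_div_norm {z : ℂ} (hre : 0 ≤ z.re) (him : 0 ≤ z.im) :
    arg z ≤ π / 2 * (z.im / ‖z‖) := by
  have h := Real.mul_le_sin (arg_nonneg_iff.2 him) (arg_le_pi_div_two_iff.2 (Or.inl hre))
  rw [sin_arg] at h
  calc arg z = π / 2 * (2 / π * arg z) := by field_simp
    _ ≤ π / 2 * (z.im / ‖z‖) := by gcongr

lemma mul_arg_le_pi_div_three {z : ℂ} {γ : ℝ} (hz : z.im = 1) (hγ : 0 ≤ γ)
    (h : 3 * γ ≤ 2 * z.re) : γ * arg z ≤ π / 3 := by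
  have hnorm : z.re ≤ ‖z‖ := re_le_norm z
  have hz0 : 0 < ‖z‖ := norm_pos_iff.2 fun h => by simp [h] at hz
  have harg := arg_le_pi_div_two_mul_im_div_norm (by linarith) (by rw [hz]; exact zero_le_one)
  rw [hz] at harg
  calc γ * arg z ≤ γ * (π / 2 * (1 / ‖z‖)) := by gcongr
    _ = π / 6 * (3 * γ) / ‖z‖ := by ring
    _ ≤ π / 3 := by rw [div_le_iff₀ hz0]; nlinarith [pi_pos]

section CpowBounds

variable {z : ℂ} {γ : ℝ}

lemma norm_rpow_div_two_le_re_cpow (hz : 0 ≤ arg z) (hγ : 0 ≤ γ) (h : γ * arg z ≤ π / 3) :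
    ‖z‖ ^ γ / 2 ≤ (z ^ (γ : ℂ)).re := by
  have hcos : 1 / 2 ≤ Real.cos (arg z * γ) := by
    rw [← cos_pi_div_three, mul_comm]
    exact cos_le_cos_of_nonneg_of_le_pi (by positivity) (by linarith [pi_pos]) h
  rw [cpow_ofReal_re]
  nlinarith [rpow_nonneg (norm_nonneg z) γ]

lemma im_cpow_pos (hz : z ≠ 0) (h₀ : 0 < γ * arg z) (hπ : γ * arg z < π) :
    0 < (z ^ (γ : ℂ)).im := by
  rw [cpow_ofReal_im, mul_comm (arg z)]
  exact mul_pos (rpow_pos_of_pos (norm_pos_iff.2 hz) γ) (sin_pos_of_pos_of_lt_pi h₀ hπ)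

lemma norm_rpow_mul_sin_arg (hz : z ≠ 0) :
    ‖z‖ ^ γ * Real.sin (arg z) = ‖z‖ ^ (γ - 1) * z.im := by
  rw [sin_arg, rpow_sub_one (norm_ne_zero_iff.2 hz)]
  ring

lemma im_cpow_le (hz : z ≠ 0) (hre : 0 ≤ z.re) (him : 0 ≤ z.im) (hγ : 0 ≤ γ) :
    (z ^ (γ : ℂ)).im ≤ π / 2 * γ * ‖z‖ ^ (γ - 1) * z.im := by
  have harg : arg z ≤ π / 2 * Real.sin (arg z) := by
    rw [sin_arg]; exact arg_le_pi_div_two_mul_im_div_norm hre him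
  have hsin : Real.sin (arg z * γ) ≤ γ * (π / 2 * Real.sin (arg z)) :=
    (Real.sin_le (by positivity [arg_nonneg_iff.2 him])).trans (by rw [mul_comm]; gcongr)
  calc (z ^ (γ : ℂ)).im ≤ ‖z‖ ^ γ * (γ * (π / 2 * Real.sin (arg z))) := by
        rw [cpow_ofReal_im]; gcongr
    _ = π / 2 * γ * ‖z‖ ^ (γ - 1) * z.im := by
      linear_combination (π / 2 * γ) * norm_rpow_mul_sin_arg (γ := γ) hz

lemma le_im_cpow (hz : z ≠ 0) (him : 0 ≤ z.im) (hγ : 0 ≤ γ) (h : γ * arg z ≤ π / 2) :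
    2 / π * γ * ‖z‖ ^ (γ - 1) * z.im ≤ (z ^ (γ : ℂ)).im := by
  have harg : 0 ≤ arg z := arg_nonneg_iff.2 him
  have hsin : 2 / π * (γ * Real.sin (arg z)) ≤ Real.sin (arg z * γ) := by
    rw [mul_comm (arg z)]
    exact le_trans (by gcongr; exact Real.sin_le harg) (Real.mul_le_sin (by positivity) h)
  calc 2 / π * γ * ‖z‖ ^ (γ - 1) * z.im
        = ‖z‖ ^ γ * (2 / π * (γ * Real.sin (arg z))) := by
        linear_combination (-(2 / π * γ)) * norm_rpow_mul_sin_arg (γ := γ) hz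
    _ ≤ (z ^ (γ : ℂ)).im := by rw [cpow_ofReal_im]; gcongr

end CpowBounds

section HorizontalLine

variable {ζ : ℂ} {γ : ℝ}

lemma one_le_norm_add_ofReal (hζ : ζ.im = 1) (r : ℝ) : 1 ≤ ‖ζ + r‖ := by
  simpa [hζ] using abs_im_le_norm (ζ + r)

lemma add_ofReal_ne_zero (hζ : ζ.im = 1) (r : ℝ) : ζ + r ≠ 0 :=
  norm_pos_iff.1 (zero_lt_one.trans_le (one_le_norm_add_ofReal hζ r))

lemma norm_add_ofReal_le_of_le {p r : ℝ} (hp : 0 ≤ (ζ + p).re) (hpr : p ≤ r) :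
    ‖ζ + p‖ ≤ ‖ζ + r‖ := by
  simp only [norm_def, normSq_apply, add_re, add_im, ofReal_re, ofReal_im, add_zero] at hp ⊢
  gcongr
  nlinarith

lemma sub_norm_le_norm_add_ofReal (ζ : ℂ) (r : ℝ) : r - ‖ζ‖ ≤ ‖ζ + r‖ := by
  have h : ‖(r : ℂ)‖ ≤ ‖ζ + r‖ + ‖-ζ‖ := by simpa using norm_add_le (ζ + r) (-ζ)
  rw [norm_real, norm_neg, Real.norm_eq_abs] at h
  linarith [le_abs_self r]

lemma tendsto_norm_add_ofReal_atTop (ζ : ℂ) : Tendsto (fun r : ℝ => ‖ζ + r‖) atTop atTop :=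
  tendsto_atTop_mono (sub_norm_le_norm_add_ofReal ζ)
    (tendsto_atTop_add_const_right _ _ tendsto_id)

lemma norm_add_ofReal_le_add_one {p r : ℝ} (hr : r ∈ Icc p (p + 1)) :
    ‖ζ + r‖ ≤ ‖ζ + p‖ + 1 :=
  calc ‖ζ + r‖ = ‖(ζ + p) + ((r - p : ℝ) : ℂ)‖ := by push_cast; ring_nf
    _ ≤ ‖ζ + p‖ + ‖((r - p : ℝ) : ℂ)‖ := norm_add_le _ _
    _ ≤ ‖ζ + p‖ + 1 := by
      rw [norm_real, Real.norm_of_nonneg (by linarith [hr.1])]; linarith [hr.2]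

lemma hasDerivAt_add_ofReal_cpow (hζ : ζ.im ≠ 0) (r : ℝ) :
    HasDerivAt (fun t : ℝ => (ζ + t) ^ (γ : ℂ)) (γ * (ζ + r) ^ (γ - 1 : ℂ)) r := by
  have hslit : ζ + r ∈ slitPlane := Or.inr (by simpa using hζ)
  simpa using (((hasDerivAt_id (r : ℂ)).const_add ζ).cpow_const hslit).comp_ofReal

lemma continuous_add_ofReal_cpow (hζ : ζ.im ≠ 0) :
    Continuous fun t : ℝ => (ζ + t) ^ (γ : ℂ) :=
  continuous_iff_continuousAt.2 fun r => (hasDerivAt_add_ofReal_cpow hζ r).continuousAt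

lemma norm_add_ofReal_cpow_sub_le (hζ : ζ.im ≠ 0) (hγ : 1 ≤ γ) {p r : ℝ}
    (hr : r ∈ Icc p (p + 1)) :
    ‖(ζ + r) ^ (γ : ℂ) - (ζ + p) ^ (γ : ℂ)‖ ≤ γ * (‖ζ + p‖ + 1) ^ (γ - 1) := by
  have hderiv : ∀ t ∈ Ico p (p + 1),
      ‖(γ : ℂ) * (ζ + t) ^ (γ - 1 : ℂ)‖ ≤ γ * (‖ζ + p‖ + 1) ^ (γ - 1) := by
    intro t ht
    have hdist := norm_add_ofReal_le_add_one (ζ := ζ) (Ico_subset_Icc_self ht)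
    rw [norm_mul, norm_real, Real.norm_of_nonneg (by linarith), ← ofReal_one, ← ofReal_sub,
      norm_cpow_real]
    gcongr
  have h := norm_image_sub_le_of_norm_deriv_le_segment'
    (fun t _ => (hasDerivAt_add_ofReal_cpow (γ := γ) hζ t).hasDerivWithinAt) hderiv r hr
  calc _ ≤ γ * (‖ζ + p‖ + 1) ^ (γ - 1) * (r - p) := h
    _ ≤ γ * (‖ζ + p‖ + 1) ^ (γ - 1) := by
      apply mul_le_of_le_one_right (by positivity) (by linarith [hr.2])

lemma im_add_ofReal_cpow_pos (hζ : ζ.im = 1) (hγ : 0 < γ) (harg : γ * arg ζ ≤ π) {r : ℝ}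
    (hr : 0 < r) : 0 < ((ζ + r) ^ (γ : ℂ)).im := by
  have him : (ζ + r).im = 1 := by simp [hζ]
  have hpos : 0 < arg (ζ + r) := by
    rw [arg_eq_pi_div_two_sub_arctan him]; linarith [arctan_lt_pi_div_two (ζ + r).re]
  have hlt : arg (ζ + r) < arg ζ := by
    rw [arg_eq_pi_div_two_sub_arctan him, arg_eq_pi_div_two_sub_arctan hζ]
    exact sub_lt_sub_left (arctan_strictMono (by simpa using hr)) _
  exact im_cpow_pos (add_ofReal_ne_zero hζ r) (by positivity) (by nlinarith)

lemma norm_rpow_div_two_le_re_add_ofReal_cpow (hζ : ζ.im = 1) (hγ : 0 ≤ γ) {r : ℝ}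
    (hr : 3 * γ ≤ 2 * (ζ + r).re) : ‖ζ + r‖ ^ γ / 2 ≤ ((ζ + r) ^ (γ : ℂ)).re :=
  norm_rpow_div_two_le_re_cpow (arg_nonneg_iff.2 (by simp [hζ])) hγ
    (mul_arg_le_pi_div_three (by simp [hζ]) hγ hr)

lemma le_im_add_ofReal_cpow (hζ : ζ.im = 1) (hγ : 0 ≤ γ) {r : ℝ}
    (hr : 3 * γ ≤ 2 * (ζ + r).re) :
    2 / π * γ * ‖ζ + r‖ ^ (γ - 1) ≤ ((ζ + r) ^ (γ : ℂ)).im := by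
  have him : (ζ + r).im = 1 := by simp [hζ]
  simpa [him] using le_im_cpow (add_ofReal_ne_zero hζ r) (by rw [him]; exact zero_le_one) hγ
    ((mul_arg_le_pi_div_three him hγ hr).trans (by linarith [pi_pos]))

lemma im_add_ofReal_cpow_le (hζ : ζ.im = 1) (hγ : 0 ≤ γ) {r : ℝ} (hr : 0 ≤ (ζ + r).re) :
    ((ζ + r) ^ (γ : ℂ)).im ≤ π / 2 * γ * ‖ζ + r‖ ^ (γ - 1) := by
  have him : (ζ + r).im = 1 := by simp [hζ]
  simpa [him] using im_cpow_le (add_ofReal_ne_zero hζ r) hr (by rw [him]; exact zero_le_one) hγ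

lemma eventually_three_mul_le_two_mul_re_add_ofReal (ζ : ℂ) (γ : ℝ) :
    ∀ᶠ r : ℝ in atTop, 3 * γ ≤ 2 * (ζ + r).re := by
  filter_upwards [eventually_ge_atTop (3 * γ / 2 - ζ.re)] with r hr
  simp only [add_re, ofReal_re]
  linarith

lemma tendsto_re_add_ofReal_cpow_atTop (hζ : ζ.im = 1) (hγ : 0 < γ) :
    Tendsto (fun r : ℝ => ((ζ + r) ^ (γ : ℂ)).re) atTop atTop := by
  refine tendsto_atTop_mono' _ ?_
    (((tendsto_rpow_atTop hγ).comp (tendsto_norm_add_ofReal_atTop ζ)).atTop_div_const two_pos)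
  filter_upwards [eventually_three_mul_le_two_mul_re_add_ofReal ζ γ] with r hr
  exact norm_rpow_div_two_le_re_add_ofReal_cpow hζ hγ.le hr

lemma exists_ge_re_add_ofReal_cpow_near (hζ : ζ.im = 1) (hγ : 0 < γ) {r₁ x : ℝ}
    (hr₁ : 3 * γ ≤ 2 * (ζ + r₁).re) (hx : 1 ≤ x) :
    ∃ p, r₁ ≤ p ∧ |((ζ + p) ^ (γ : ℂ)).re - x| ≤ max 1 ((ζ + r₁) ^ (γ : ℂ)).re ∧
      ‖ζ + p‖ ^ γ ≤ 2 * max 1 ((ζ + r₁) ^ (γ : ℂ)).re * x := by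
  have hU : ∀ p, r₁ ≤ p → ‖ζ + p‖ ^ γ ≤ 2 * ((ζ + p) ^ (γ : ℂ)).re := fun p hp => by
    have : 3 * γ ≤ 2 * (ζ + p).re := by simp only [add_re, ofReal_re] at hr₁ ⊢; linarith
    linarith [norm_rpow_div_two_le_re_add_ofReal_cpow hζ hγ.le this]
  have hM := le_max_right 1 ((ζ + r₁) ^ (γ : ℂ)).re
  have hM₁ := le_max_left 1 ((ζ + r₁) ^ (γ : ℂ)).re
  rcases le_or_gt x ((ζ + r₁) ^ (γ : ℂ)).re with hxU | hUx
  · refine ⟨r₁, le_rfl, abs_le.2 ⟨by linarith, by linarith⟩, ?_⟩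
    nlinarith [hU r₁ le_rfl]
  · obtain ⟨R, hR⟩ := ((tendsto_re_add_ofReal_cpow_atTop hζ hγ).eventually_ge_atTop x
      ).exists_forall_of_atTop
    obtain ⟨p, hp, hUp⟩ := intermediate_value_Icc (le_max_right R r₁)
      (continuous_re.comp (continuous_add_ofReal_cpow (by simp [hζ]))).continuousOn
      ⟨hUx.le, hR _ (le_max_left _ _)⟩
    replace hUp : ((ζ + p) ^ (γ : ℂ)).re = x := hUp
    refine ⟨p, hp.1, ?_, ?_⟩
    · rw [hUp, sub_self, abs_zero]; linarith
    · nlinarith [hU p hp.1]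

end HorizontalLine

end Complex

/-- The Poisson kernel of the upper half-plane, without its factor `1 / π`. -/
noncomputable def halfPlanePoissonKernel (w : ℂ) (x : ℝ) : ℝ :=
  w.im / (w.im ^ 2 + (w.re - x) ^ 2)

section PoissonKernel

variable {w : ℂ} {x : ℝ}

lemma halfPlanePoissonKernel_nonneg (hw : 0 ≤ w.im) : 0 ≤ halfPlanePoissonKernel w x :=
  div_nonneg hw (by positivity)

lemma div_two_mul_sq_le_halfPlanePoissonKernel {v M : ℝ} (hv : 0 < v) (hvw : v ≤ w.im)
    (hwM : w.im ≤ M) (hxM : |w.re - x| ≤ M) : v / (2 * M ^ 2) ≤ halfPlanePoissonKernel w x := by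
  have hre : (w.re - x) ^ 2 ≤ M ^ 2 := sq_le_sq' (abs_le.1 hxM).1 (abs_le.1 hxM).2
  have him : w.im ^ 2 ≤ M ^ 2 := pow_le_pow_left₀ (hv.le.trans hvw) hwM 2
  have hw : 0 < w.im := hv.trans_le hvw
  exact div_le_div₀ hw.le hvw (by positivity) (by linarith)

lemma halfPlanePoissonKernel_le (hw : 0 ≤ w.im) (hx : x < w.re) :
    halfPlanePoissonKernel w x ≤ w.im / (w.re - x) ^ 2 :=
  div_le_div_of_nonneg_left hw (by nlinarith) (le_add_of_nonneg_left (sq_nonneg _))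

end PoissonKernel

lemma le_setIntegral_Ioi_of_le_on_Icc {f : ℝ → ℝ} {a p m : ℝ} (hf : IntegrableOn f (Ioi a))
    (hf₀ : ∀ r ∈ Ioi a, 0 ≤ f r) (hp : a < p) (hm : ∀ r ∈ Icc p (p + 1), m ≤ f r) :
    m ≤ ∫ r in Ioi a, f r := by
  have hsub : Icc p (p + 1) ⊆ Ioi a := fun r hr => hp.trans_le hr.1
  have hvol : volume.real (Icc p (p + 1)) = 1 := by simp [measureReal_def, Real.volume_Icc]
  calc m = m * volume.real (Icc p (p + 1)) := by rw [hvol, mul_one]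
    _ ≤ ∫ r in Icc p (p + 1), f r :=
      setIntegral_ge_of_const_le_real measurableSet_Icc (by simp [Real.volume_Icc]) hm
        (hf.mono_set hsub)
    _ ≤ ∫ r in Ioi a, f r :=
      setIntegral_mono_set hf ((ae_restrict_iff' measurableSet_Ioi).2 (.of_forall hf₀))
        hsub.eventuallyLE

lemma rpow_sub_one_le_rpow_one_sub_inv {P y γ : ℝ} (hP : 0 ≤ P) (hγ : 1 ≤ γ) (h : P ^ γ ≤ y) :
    P ^ (γ - 1) ≤ y ^ (1 - 1 / γ) :=
  calc P ^ (γ - 1) = (P ^ γ) ^ (1 - 1 / γ) := by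
        rw [← rpow_mul hP]; congr 1; field_simp
    _ ≤ y ^ (1 - 1 / γ) := rpow_le_rpow (by positivity) h
        (sub_nonneg.2 ((div_le_one (by linarith)).2 hγ))

section HorizontalLine

variable {ζ : ℂ} {γ : ℝ}

lemma halfPlanePoissonKernel_add_ofReal_cpow_le (hζ : ζ.im = 1) (hγ : 0 < γ) {r x : ℝ}
    (hr : 3 * γ ≤ 2 * (ζ + r).re) (hrζ : 2 * ‖ζ‖ ≤ r) (hx : 2 * x ≤ ((ζ + r) ^ (γ : ℂ)).re) :
    halfPlanePoissonKernel ((ζ + r) ^ (γ : ℂ)) x ≤ 8 * π * γ * 2 ^ (γ + 1) * r ^ (-γ - 1) := by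
  set ρ := ‖ζ + r‖
  have hζ1 : 1 ≤ ‖ζ‖ := by simpa [hζ] using abs_im_le_norm ζ
  have hρ : r / 2 ≤ ρ := by linarith [sub_norm_le_norm_add_ofReal ζ r]
  have hρ0 : 0 < ρ := by linarith
  have hre := norm_rpow_div_two_le_re_add_ofReal_cpow hζ hγ.le hr
  have hV := im_add_ofReal_cpow_le hζ hγ.le (r := r) (by linarith)
  have hV₀ := le_im_add_ofReal_cpow hζ hγ.le hr
  have hUx : ρ ^ γ / 4 ≤ ((ζ + r) ^ (γ : ℂ)).re - x := by linarith
  have hργ : 0 < ρ ^ γ := rpow_pos_of_pos hρ0 γ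
  calc halfPlanePoissonKernel ((ζ + r) ^ (γ : ℂ)) x
      ≤ ((ζ + r) ^ (γ : ℂ)).im / (((ζ + r) ^ (γ : ℂ)).re - x) ^ 2 :=
        halfPlanePoissonKernel_le (le_trans (by positivity) hV₀) (by linarith)
    _ ≤ π / 2 * γ * ρ ^ (γ - 1) / (ρ ^ γ / 4) ^ 2 := by gcongr
    _ = 8 * π * γ * ρ ^ (-γ - 1) := by
      have h : ρ ^ (γ - 1) = ρ ^ (-γ - 1) * (ρ ^ γ) ^ 2 := by
        rw [← rpow_natCast, ← rpow_mul hρ0.le, ← rpow_add hρ0]; ring_nf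
      rw [h]; field_simp; ring
    _ ≤ 8 * π * γ * (r / 2) ^ (-γ - 1) := by
      refine mul_le_mul_of_nonneg_left ?_ (by positivity)
      exact rpow_le_rpow_of_nonpos (by linarith : (0 : ℝ) < r / 2) hρ
        (by linarith : -γ - 1 ≤ 0)
    _ = 8 * π * γ * 2 ^ (γ + 1) * r ^ (-γ - 1) := by
      rw [div_rpow (by linarith) zero_le_two, show -γ - 1 = -(γ + 1) by ring,
        rpow_neg zero_le_two]
      field_simp

lemma integrableOn_halfPlanePoissonKernel_add_ofReal_cpow (hζ : ζ.im = 1) (hγ : 0 < γ)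
    (harg : γ * arg ζ ≤ π) {t₀ : ℝ} (ht₀ : 0 < t₀) (x : ℝ) :
    IntegrableOn (fun r : ℝ => halfPlanePoissonKernel ((ζ + r) ^ (γ : ℂ)) x) (Ioi t₀) := by
  have hcont := continuous_add_ofReal_cpow (ζ := ζ) (γ := γ) (by simp [hζ])
  have hcontOn : ContinuousOn (fun r : ℝ => halfPlanePoissonKernel ((ζ + r) ^ (γ : ℂ)) x)
      (Ici t₀) := by
    refine (continuous_im.comp hcont).continuousOn.div (by fun_prop) fun r hr => ?_
    have := im_add_ofReal_cpow_pos hζ hγ harg (ht₀.trans_le hr)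
    positivity
  have hbigO : (fun r : ℝ => halfPlanePoissonKernel ((ζ + r) ^ (γ : ℂ)) x)
      =O[atTop] fun r => r ^ (-γ - 1) := by
    refine IsBigO.of_bound (8 * π * γ * 2 ^ (γ + 1)) ?_
    filter_upwards [eventually_three_mul_le_two_mul_re_add_ofReal ζ γ,
      eventually_ge_atTop (2 * ‖ζ‖), eventually_gt_atTop 0,
      (tendsto_re_add_ofReal_cpow_atTop hζ hγ).eventually_ge_atTop (2 * x)]
      with r hr hrζ hr₀ hx
    have hK₀ := halfPlanePoissonKernel_nonneg (x := x)
      (im_add_ofReal_cpow_pos hζ hγ harg hr₀).le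
    rw [Real.norm_of_nonneg hK₀, Real.norm_of_nonneg (by positivity)]
    exact halfPlanePoissonKernel_add_ofReal_cpow_le hζ hγ hr hrζ hx
  exact ((hcontOn.locallyIntegrableOn measurableSet_Ici).integrableOn_of_isBigO_atTop hbigO
    (integrableAtFilter_rpow_atTop_iff.2 (by linarith))).mono_set Ioi_subset_Ici_self

lemma le_halfPlanePoissonKernel_add_ofReal_cpow (hζ : ζ.im = 1) (hγ : 1 ≤ γ) {p r x L : ℝ}
    (hp : 3 * γ ≤ 2 * (ζ + p).re) (hL : |((ζ + p) ^ (γ : ℂ)).re - x| ≤ L)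
    (hr : r ∈ Icc p (p + 1)) :
    γ / (π * ((π / 2 * γ + L) * 2 ^ (γ - 1)) ^ 2) / ‖ζ + p‖ ^ (γ - 1) ≤
      halfPlanePoissonKernel ((ζ + r) ^ (γ : ℂ)) x := by
  set P := ‖ζ + p‖
  set Q := P ^ (γ - 1)
  set M := (π / 2 * γ + L) * 2 ^ (γ - 1) with hM
  have hP : 1 ≤ P := one_le_norm_add_ofReal hζ p
  have hQ : 1 ≤ Q := one_le_rpow hP (by linarith)
  have hL₀ : 0 ≤ L := (abs_nonneg _).trans hL
  have h2 : 1 ≤ (2 : ℝ) ^ (γ - 1) := one_le_rpow one_le_two (by linarith)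
  have hr' : 3 * γ ≤ 2 * (ζ + r).re := by
    simp only [add_re, ofReal_re] at hp ⊢; linarith [hr.1]
  have hPρ : P ≤ ‖ζ + r‖ := norm_add_ofReal_le_of_le (by linarith) hr.1
  have hρ : ‖ζ + r‖ ≤ 2 * P := by linarith [norm_add_ofReal_le_add_one (ζ := ζ) hr]
  have h2P : (2 * P) ^ (γ - 1) = 2 ^ (γ - 1) * Q := mul_rpow zero_le_two (by linarith)
  have hQρ : Q ≤ ‖ζ + r‖ ^ (γ - 1) := rpow_le_rpow (by linarith) hPρ (by linarith)
  have hV₀ : 2 / π * γ * Q ≤ ((ζ + r) ^ (γ : ℂ)).im :=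
    le_trans (by gcongr) (le_im_add_ofReal_cpow hζ (by linarith) hr')
  have h2Q : 1 ≤ 2 ^ (γ - 1) * Q := by nlinarith
  have hMQ : M * Q = π / 2 * γ * (2 ^ (γ - 1) * Q) + L * (2 ^ (γ - 1) * Q) := by
    rw [hM]; ring
  have hV : ((ζ + r) ^ (γ : ℂ)).im ≤ M * Q :=
    calc ((ζ + r) ^ (γ : ℂ)).im ≤ π / 2 * γ * ‖ζ + r‖ ^ (γ - 1) :=
          im_add_ofReal_cpow_le hζ (by linarith) (by linarith)
      _ ≤ π / 2 * γ * (2 ^ (γ - 1) * Q) := by rw [← h2P]; gcongr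
      _ ≤ M * Q := by rw [hMQ]; nlinarith
  have hU : |((ζ + r) ^ (γ : ℂ)).re - x| ≤ M * Q :=
    calc |((ζ + r) ^ (γ : ℂ)).re - x|
        ≤ ‖(ζ + r) ^ (γ : ℂ) - (ζ + p) ^ (γ : ℂ)‖ + |((ζ + p) ^ (γ : ℂ)).re - x| := by
          refine (abs_sub_le _ ((ζ + p) ^ (γ : ℂ)).re _).trans ?_
          gcongr
          rw [← sub_re]; exact abs_re_le_norm _
      _ ≤ γ * (2 ^ (γ - 1) * Q) + L := by
          gcongr
          rw [← h2P]
          refine (norm_add_ofReal_cpow_sub_le (by simp [hζ]) hγ hr).trans ?_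
          gcongr; linarith
      _ ≤ M * Q := by
          have hπ : 1 ≤ π / 2 := by linarith [pi_gt_three]
          rw [hMQ]
          nlinarith [mul_le_mul_of_nonneg_left h2Q hL₀,
            mul_le_mul_of_nonneg_right hπ (by nlinarith : 0 ≤ γ * (2 ^ (γ - 1) * Q))]
  calc γ / (π * M ^ 2) / Q = 2 / π * γ * Q / (2 * (M * Q) ^ 2) := by field_simp
    _ ≤ halfPlanePoissonKernel ((ζ + r) ^ (γ : ℂ)) x :=
      div_two_mul_sq_le_halfPlanePoissonKernel (by positivity) hV₀ hV hU

end HorizontalLine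

theorem exists_pos_mul_rpow_le_integral_halfPlanePoissonKernel {ζ : ℂ} {γ t₀ : ℝ}
    (hζ : ζ.im = 1) (hγ : 1 ≤ γ) (harg : γ * arg ζ ≤ π) (ht₀ : 0 < t₀) :
    ∃ c > 0, ∀ x ≥ 1,
      c * x ^ (-1 + 1 / γ) ≤ ∫ r in Ioi t₀, halfPlanePoissonKernel ((ζ + r) ^ (γ : ℂ)) x := by
  set r₁ := max (t₀ + 1) (3 * γ / 2 - ζ.re)
  have hr₁ : 3 * γ ≤ 2 * (ζ + r₁).re := by
    simp only [add_re, ofReal_re]; linarith [le_max_right (t₀ + 1) (3 * γ / 2 - ζ.re)]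
  set M₀ := max 1 ((ζ + r₁) ^ (γ : ℂ)).re
  have hM₀ : 1 ≤ M₀ := le_max_left _ _
  set c₀ := γ / (π * ((π / 2 * γ + M₀) * 2 ^ (γ - 1)) ^ 2)
  have hc₀ : 0 < c₀ := by positivity
  refine ⟨c₀ / (2 * M₀) ^ (1 - 1 / γ), by positivity, fun x hx => ?_⟩
  obtain ⟨p, hp, hUp, hPp⟩ := exists_ge_re_add_ofReal_cpow_near hζ (by linarith) hr₁ hx
  have hp' : 3 * γ ≤ 2 * (ζ + p).re := by simp only [add_re, ofReal_re] at hr₁ ⊢; linarith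
  calc c₀ / (2 * M₀) ^ (1 - 1 / γ) * x ^ (-1 + 1 / γ)
        = c₀ / (2 * M₀ * x) ^ (1 - 1 / γ) := by
        rw [mul_rpow (by positivity : (0 : ℝ) ≤ 2 * M₀) (by positivity : (0 : ℝ) ≤ x),
          show -1 + 1 / γ = -(1 - 1 / γ) by ring, rpow_neg (by positivity)]
        field_simp
    _ ≤ c₀ / ‖ζ + p‖ ^ (γ - 1) :=
      div_le_div_of_nonneg_left hc₀.le
        (rpow_pos_of_pos (zero_lt_one.trans_le (one_le_norm_add_ofReal hζ p)) _)
        (rpow_sub_one_le_rpow_one_sub_inv (norm_nonneg _) hγ hPp)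
    _ ≤ ∫ r in Ioi t₀, halfPlanePoissonKernel ((ζ + r) ^ (γ : ℂ)) x :=
      le_setIntegral_Ioi_of_le_on_Icc
        (integrableOn_halfPlanePoissonKernel_add_ofReal_cpow hζ (by linarith) harg ht₀ x)
        (fun r hr => halfPlanePoissonKernel_nonneg
          (im_add_ofReal_cpow_pos hζ (by linarith) harg (ht₀.trans hr)).le)
        (by linarith [le_max_left (t₀ + 1) (3 * γ / 2 - ζ.re)])
        fun r hr => le_halfPlanePoissonKernel_add_ofReal_cpow hζ hγ hp' hUp hr

/-- There is `c > 0` such that for every real `x' ≥ 1`,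
`∫_{1/b}^∞ V'(r) / (V'(r)² + (U'(r) - x')²) dr ≥ c (x')^{-1 + 1/γ}`. -/
theorem stmt_6 (a b : ℝ) (hb : 0 < b)
    (ζs : ℂ) (hζs : ζs = -(a : ℂ) / (b : ℂ) + Complex.I)
    (γ : ℝ) (hγ : γ = Real.pi / Complex.arg ζs)
    (U' V' : ℝ → ℝ)
    (hU : ∀ r : ℝ, U' r = ((ζs + (r : ℂ)) ^ (γ : ℂ)).re)
    (hV : ∀ r : ℝ, V' r = ((ζs + (r : ℂ)) ^ (γ : ℂ)).im) :
    ∃ c : ℝ, 0 < c ∧ ∀ x' : ℝ, 1 ≤ x' →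
      (∫ r in Set.Ioi (1 / b), V' r / (V' r ^ 2 + (U' r - x') ^ 2))
        ≥ c * x' ^ (-1 + 1 / γ) := by
  obtain rfl : U' = _ := funext hU
  obtain rfl : V' = _ := funext hV
  have hζ : ζs.im = 1 := by simp [hζs]
  have harg₀ : 0 < arg ζs := by
    rw [arg_eq_pi_div_two_sub_arctan hζ]; linarith [arctan_lt_pi_div_two ζs.re]
  have harg₁ : arg ζs < π := by
    rw [arg_eq_pi_div_two_sub_arctan hζ]; linarith [neg_pi_div_two_lt_arctan ζs.re]
  have hγ₁ : 1 ≤ γ := by rw [hγ, le_div_iff₀ harg₀]; linarith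
  have hγarg : γ * arg ζs = π := by rw [hγ]; field_simp
  obtain ⟨c, hc, hint⟩ :=
    exists_pos_mul_rpow_le_integral_halfPlanePoissonKernel hζ hγ₁ hγarg.le (one_div_pos.2 hb)
  exact ⟨c, hc, hint⟩
end

section
/- Fix λ > 0. Then lim_{s → ∞} ∫_{{u ∈ ℝ : λ < bu + as ≤ s}} H̃(Φ(u + is)) · e^{-(bu + as)} du = 0, i.e. the integral of the function H̃∘Φ against the weight e^{-(bu+av)} over the horizontal edge E_s = {u + is : λ < bu + as ≤ s} tends to 0 as s tends to infinity. -/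
open Complex MeasureTheory Set Filter

lemma ratio_mono {s u₀ u : ℝ} (hs : 0 < s) (h : u₀ < u) :
    u₀ / Real.sqrt (u₀ ^ 2 + s ^ 2) < u / Real.sqrt (u ^ 2 + s ^ 2) := by
  have h0 : (0:ℝ) < u₀ ^ 2 + s ^ 2 := by positivity
  have h1 : (0:ℝ) < u ^ 2 + s ^ 2 := by positivity
  set A0 := Real.sqrt (u₀ ^ 2 + s ^ 2) with hA0
  set A1 := Real.sqrt (u ^ 2 + s ^ 2) with hA1
  have hA0p : 0 < A0 := Real.sqrt_pos.2 h0
  have hA1p : 0 < A1 := Real.sqrt_pos.2 h1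
  have hA0sq : A0 ^ 2 = u₀ ^ 2 + s ^ 2 := Real.sq_sqrt h0.le
  have hA1sq : A1 ^ 2 = u ^ 2 + s ^ 2 := Real.sq_sqrt h1.le
  rw [div_lt_div_iff₀ hA0p hA1p]
  rcases le_or_gt 0 u₀ with hu0 | hu0
  · have hu : 0 < u := lt_of_le_of_lt hu0 h
    have hq : u₀ ^ 2 < u ^ 2 := by nlinarith [mul_le_mul_of_nonneg_left h.le hu0, mul_lt_mul_of_pos_right h hu]
    have hu2 : u₀ ^ 2 * s ^ 2 < u ^ 2 * s ^ 2 := by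
      exact mul_lt_mul_of_pos_right hq (by positivity)
    have hsq : (u₀ * A1) ^ 2 < (u * A0) ^ 2 := by nlinarith
    exact lt_of_pow_lt_pow_left₀ 2 (by positivity) hsq
  · rcases le_or_gt 0 u with hu | hu
    · calc u₀ * A1 < 0 := mul_neg_of_neg_of_pos hu0 hA1p
        _ ≤ u * A0 := mul_nonneg hu (le_of_lt hA0p)
    · have hq : u ^ 2 < u₀ ^ 2 := by nlinarith [mul_lt_mul_of_neg_right h hu, mul_lt_mul_of_neg_left h hu0]
      have hu2 : u ^ 2 * s ^ 2 < u₀ ^ 2 * s ^ 2 := mul_lt_mul_of_pos_right hq (by positivity)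
      have hsq : (-(u * A0)) ^ 2 < (-(u₀ * A1)) ^ 2 := by nlinarith
      have := lt_of_pow_lt_pow_left₀ 2 (by nlinarith) hsq
      linarith

lemma arg_lt_arg {s u₀ u : ℝ} (hs : 0 < s) (h : u₀ < u) :
    Complex.arg ((u:ℂ) + (s:ℂ) * Complex.I) < Complex.arg ((u₀:ℂ) + (s:ℂ) * Complex.I) := by
  have him : ∀ v : ℝ, ((v:ℂ) + (s:ℂ) * Complex.I).im = s := by intro v; simp
  have hre : ∀ v : ℝ, ((v:ℂ) + (s:ℂ) * Complex.I).re = v := by intro v; simp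
  have habs : ∀ v : ℝ, ‖(v:ℂ) + (s:ℂ) * Complex.I‖ = Real.sqrt (v ^ 2 + s ^ 2) :=
    fun v => Complex.norm_add_mul_I v s
  have hmem : ∀ v : ℝ, v / Real.sqrt (v ^ 2 + s ^ 2) ∈ Icc (-1 : ℝ) 1 := by
    intro v
    have hp : (0:ℝ) < Real.sqrt (v ^ 2 + s ^ 2) := Real.sqrt_pos.2 (by positivity)
    have h2 : |v| ≤ Real.sqrt (v ^ 2 + s ^ 2) := by
      rw [← Real.sqrt_sq_eq_abs]
      exact Real.sqrt_le_sqrt (by nlinarith)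
    constructor
    · rw [neg_le, ← neg_div]
      exact (div_le_one hp).2 (by cases abs_cases v with | inl h' => nlinarith | inr h' => nlinarith)
    · exact (div_le_one hp).2 (by cases abs_cases v with | inl h' => nlinarith | inr h' => nlinarith)
  rw [Complex.arg_of_im_pos (by rw [him]; exact hs), Complex.arg_of_im_pos (by rw [him]; exact hs),
    hre, hre, habs, habs]
  exact Real.strictAntiOn_arccos (hmem u₀) (hmem u) (ratio_mono hs h)

lemma arg_pos_of_im_pos {z : ℂ} (hz : 0 < z.im) : 0 < Complex.arg z := by
  rw [Complex.arg_of_im_pos hz]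
  refine Real.arccos_pos.2 ?_
  have h1 : |z.re| < ‖z‖ := Complex.abs_re_lt_norm.2 (ne_of_gt hz)
  have h2 : 0 < ‖z‖ := lt_of_le_of_lt (abs_nonneg _) h1
  rw [div_lt_one h2]
  exact lt_of_le_of_lt (le_abs_self _) h1

lemma abs_cpow_real' {z : ℂ} (hz : z ≠ 0) (r : ℝ) :
    ‖z ^ (r : ℂ)‖ = ‖z‖ ^ r := by
  rw [Complex.norm_cpow_of_ne_zero hz]
  simp

lemma im_cpow_pos {z : ℂ} (hz : 0 < z.im) {r : ℝ} (hr : 0 < r)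
    (harg : r * Complex.arg z < Real.pi) :
    0 < (z ^ (r : ℂ)).im := by
  have hz0 : z ≠ 0 := by
    intro h0; rw [h0] at hz; simp at hz
  rw [Complex.cpow_def_of_ne_zero hz0, Complex.exp_im]
  have him : (Complex.log z * (r : ℂ)).im = Complex.arg z * r := by
    simp [Complex.log_im]
  rw [him]
  apply mul_pos (Real.exp_pos _)
  rw [mul_comm]
  exact Real.sin_pos_of_pos_of_lt_pi (mul_pos hr (arg_pos_of_im_pos hz)) harg

lemma deriv_eps_bound (ε : ℝ → ℝ)
    (hεnn : ∀ x ∈ Icc (0 : ℝ) 1, 0 ≤ ε x)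
    (hεsm : ContDiffOn ℝ (⊤ : ℕ∞) ε (Ioc 0 1))
    (hεmono : StrictMonoOn ε (Ioc 0 1))
    (hεconc : ConcaveOn ℝ (Ioc 0 1) ε) :
    ∀ y ∈ Ioo (0:ℝ) 1, 0 ≤ deriv ε y ∧ y * deriv ε y ≤ 2 * ε y := by
  intro y hy
  obtain ⟨hy0, hy1⟩ := hy
  have hymem : y ∈ Ioc (0:ℝ) 1 := ⟨hy0, hy1.le⟩
  have hnhds : Ioc (0:ℝ) 1 ∈ nhds y :=
    mem_nhds_iff.2 ⟨Ioo 0 1, Ioo_subset_Ioc_self, isOpen_Ioo, ⟨hy0, hy1⟩⟩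
  have hdiff : DifferentiableAt ℝ ε y :=
    ((hεsm.differentiableOn (by simp)) y hymem).differentiableAt hnhds
  constructor
  · -- lower bound
    set z := (y + 1) / 2 with hz
    have hyz : y < z := by rw [hz]; linarith
    have hzmem : z ∈ Ioc (0:ℝ) 1 := ⟨by rw [hz]; linarith, by rw [hz]; linarith⟩
    have h1 : slope ε y z ≤ deriv ε y := hεconc.slope_le_deriv hymem hzmem hyz hdiff
    have h2 : 0 ≤ slope ε y z := by
      rw [slope_def_field]
      apply div_nonneg _ (by linarith)
      have := hεmono hymem hzmem hyz
      linarith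
    linarith
  · -- upper bound
    set x := y / 2 with hx
    have hxy : x < y := by rw [hx]; linarith
    have hxmem : x ∈ Ioc (0:ℝ) 1 := ⟨by rw [hx]; linarith, by rw [hx]; linarith⟩
    have h1 : deriv ε y ≤ slope ε x y := hεconc.deriv_le_slope hxmem hymem hxy hdiff
    have h2 : slope ε x y = (ε y - ε x) / (y / 2) := by
      rw [slope_def_field, hx]; ring_nf
    have hεx : 0 ≤ ε x := hεnn x ⟨by rw [hx]; linarith, by rw [hx]; linarith⟩
    have h3 : y * deriv ε y ≤ y * slope ε x y :=
      mul_le_mul_of_nonneg_left h1 hy0.le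
    have h4 : y * slope ε x y = 2 * (ε y - ε x) := by
      rw [h2]; field_simp
    nlinarith

section hp
variable (γ A : ℝ) (ε h : ℝ → ℝ)

lemma h_props (hγ : 0 < γ) (hA : 0 < A)
    (hεnn : ∀ x ∈ Icc (0 : ℝ) 1, 0 ≤ ε x)
    (hεsm : ContDiffOn ℝ (⊤ : ℕ∞) ε (Ioc 0 1))
    (hεmono : StrictMonoOn ε (Ioc 0 1))
    (hεconc : ConcaveOn ℝ (Ioc 0 1) ε)
    (hh : ∀ x : ℝ, h x =
      γ⁻¹ * A * Real.exp (-(|x| ^ (1 / γ))) * deriv ε (Real.exp (-(|x| ^ (1 / γ))))) :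
    ∀ x : ℝ, x ≠ 0 →
      0 ≤ h x ∧ h x ≤ 2 * (γ⁻¹ * A) * ε (Real.exp (-(|x| ^ (1 / γ)))) := by
  intro x hx
  set t := |x| ^ (1 / γ) with ht
  have htpos : 0 < t := Real.rpow_pos_of_pos (abs_pos.2 hx) _
  set y := Real.exp (-t) with hy
  have hy0 : 0 < y := Real.exp_pos _
  have hy1 : y < 1 := by
    rw [hy, ← Real.exp_zero]
    exact Real.exp_lt_exp.2 (by linarith)
  obtain ⟨hd0, hd2⟩ := deriv_eps_bound ε hεnn hεsm hεmono hεconc y ⟨hy0, hy1⟩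
  rw [hh x, ← ht, ← hy]
  constructor
  · have : 0 ≤ γ⁻¹ := by positivity
    positivity
  · have hkey : γ⁻¹ * A * (y * deriv ε y) ≤ γ⁻¹ * A * (2 * ε y) :=
      mul_le_mul_of_nonneg_left hd2 (by positivity)
    nlinarith [hkey]

lemma h_measurable (hγ : 0 < γ)
    (hh : ∀ x : ℝ, h x =
      γ⁻¹ * A * Real.exp (-(|x| ^ (1 / γ))) * deriv ε (Real.exp (-(|x| ^ (1 / γ))))) :
    Measurable h := by
  have heq : h = fun x : ℝ =>
      γ⁻¹ * A * Real.exp (-(|x| ^ (1 / γ))) * deriv ε (Real.exp (-(|x| ^ (1 / γ)))) :=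
    funext hh
  rw [heq]
  have h1 : Measurable fun x : ℝ => Real.exp (-(|x| ^ (1 / γ))) :=
    (Real.continuous_exp.comp
      (((Real.continuous_rpow_const (by positivity)).comp _root_.continuous_abs).neg)).measurable
  exact (measurable_const.mul h1).mul ((measurable_deriv ε).comp h1)

lemma eps_small (hεc : ContinuousOn ε (Icc 0 1)) (hε0 : ε 0 = 0) :
    ∀ δ > (0:ℝ), ∃ η > (0:ℝ), ∀ z : ℝ, 0 < z → z ≤ 1 → z < η → ε z < δ := by
  intro δ hδ
  have hc : ContinuousWithinAt ε (Icc 0 1) 0 := hεc 0 (by constructor <;> norm_num)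
  rw [Metric.continuousWithinAt_iff] at hc
  obtain ⟨η, hη, hball⟩ := hc δ hδ
  refine ⟨η, hη, fun z hz0 hz1 hzη => ?_⟩
  have := hball (show z ∈ Icc (0:ℝ) 1 from ⟨hz0.le, hz1⟩)
    (by rw [Real.dist_eq]; rw [_root_.abs_of_nonneg (by linarith : (0:ℝ) ≤ z - 0)]; linarith)
  rw [Real.dist_eq, hε0, sub_zero] at this
  calc ε z ≤ |ε z| := le_abs_self _
    _ < δ := this

end hp

lemma poisson_eq (U V : ℝ) (hV : 0 < V) (x : ℝ) :
    V / (V ^ 2 + (U - x) ^ 2) = V⁻¹ * (1 + ((x - U) / V) ^ 2)⁻¹ := by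
  have h1 : V ^ 2 + (U - x) ^ 2 > 0 := by positivity
  field_simp
  ring

lemma poisson_integrable (U V : ℝ) (hV : 0 < V) :
    Integrable (fun x : ℝ => V / (V ^ 2 + (U - x) ^ 2)) := by
  have h1 : Integrable (fun y : ℝ => (1 + y ^ 2)⁻¹) := integrable_inv_one_add_sq
  have h2 : Integrable (fun x : ℝ => (1 + (V⁻¹ * x) ^ 2)⁻¹) := by
    have := (integrable_comp_smul_iff (volume : Measure ℝ)
      (fun y : ℝ => (1 + y ^ 2)⁻¹) (R := V⁻¹) (by positivity)).2 h1
    simpa [smul_eq_mul] using this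
  have h3 : Integrable (fun x : ℝ => (1 + (V⁻¹ * (x - U)) ^ 2)⁻¹) := h2.comp_sub_right U
  have h4 := h3.const_mul V⁻¹
  apply h4.congr
  filter_upwards with x
  rw [poisson_eq U V hV x]
  ring_nf

lemma poisson_integral (U V : ℝ) (hV : 0 < V) :
    ∫ x : ℝ, V / (V ^ 2 + (U - x) ^ 2) = Real.pi := by
  have h0 : ∀ x : ℝ, V / (V ^ 2 + (U - x) ^ 2) = V⁻¹ * (1 + ((x - U) / V) ^ 2)⁻¹ :=
    poisson_eq U V hV
  simp_rw [h0]
  rw [integral_const_mul]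
  have h1 : ∫ x : ℝ, (1 + ((x - U) / V) ^ 2)⁻¹ = ∫ x : ℝ, (1 + (x / V) ^ 2)⁻¹ :=
    integral_sub_right_eq_self (fun x : ℝ => (1 + (x / V) ^ 2)⁻¹) U
  rw [h1]
  have h2 : ∫ x : ℝ, (1 + (x / V) ^ 2)⁻¹ = |V| • ∫ y : ℝ, (1 + y ^ 2)⁻¹ :=
    Measure.integral_comp_div (fun y : ℝ => (1 + y ^ 2)⁻¹) V
  rw [h2, integral_univ_inv_one_add_sq, abs_of_pos hV, smul_eq_mul]
  field_simp

lemma kernel_small {U V R X : ℝ} (hV : 0 < V) (hR : 0 < R) (hX : 0 < X)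
    (hbig : R ≤ |U| + V) (hRX : 8 * X ≤ R) :
    ∀ x ∈ Icc (-X) X, V / (V ^ 2 + (U - x) ^ 2) ≤ 2 / R := by
  intro x hx
  rcases le_or_gt (R / 2) V with hVbig | hVsmall
  · have h1 : V / (V ^ 2 + (U - x) ^ 2) ≤ V / V ^ 2 := by
      apply div_le_div_of_nonneg_left hV.le (by positivity) (by nlinarith [sq_nonneg (U - x)])
    have h2 : V / V ^ 2 = 1 / V := by field_simp
    rw [h2] at h1
    refine h1.trans ?_
    rw [div_le_div_iff₀ hV hR]
    linarith
  · have hU : R / 2 ≤ |U| := by linarith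
    have hxX : |x| ≤ X := abs_le.2 hx
    have hc : R / 4 ≤ |U - x| := by
      have := abs_sub_abs_le_abs_sub U x
      have h8 : X ≤ R / 8 := by linarith
      calc R / 4 ≤ R / 2 - R / 8 := by linarith
        _ ≤ |U| - |x| := by linarith
        _ ≤ |U - x| := this
    have hc2 : (R / 4) ^ 2 ≤ (U - x) ^ 2 := by
      rw [← _root_.sq_abs (U - x)]
      exact pow_le_pow_left₀ (by positivity) hc 2
    rw [div_le_div_iff₀ (by positivity) hR]
    nlinarith [sq_nonneg (V - R / 4), sq_nonneg (U - x)]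

lemma htilde_bound
    (h : ℝ → ℝ) (hmeas : Measurable h)
    (C : ℝ) (hC : 0 ≤ C) (hbdd : ∀ᵐ x : ℝ, |h x| ≤ C)
    (X δ' : ℝ) (hX : 0 < X) (hδ' : 0 ≤ δ')
    (hfar : ∀ x : ℝ, X ≤ |x| → |h x| ≤ δ')
    (U V R : ℝ) (hV : 0 < V) (hR : 0 < R)
    (hbig : R ≤ |U| + V) (hRX : 8 * X ≤ R) :
    |(1 / Real.pi) * ∫ x : ℝ, h x * (V / (V ^ 2 + (U - x) ^ 2))| ≤
      δ' + 4 * C * X / (Real.pi * R) := by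
  set K : ℝ → ℝ := fun x => V / (V ^ 2 + (U - x) ^ 2) with hK
  have hKnn : ∀ x, 0 ≤ K x := fun x => by positivity
  have hKint : Integrable K := poisson_integrable U V hV
  have hKmeas : Measurable K := by
    apply Measurable.div measurable_const
    exact (measurable_const.add ((measurable_const.sub measurable_id').pow_const 2))
  have hfint : Integrable (fun x => h x * K x) := by
    refine Integrable.mono' (hKint.const_mul C) ((hmeas.mul hKmeas).aestronglyMeasurable) ?_
    filter_upwards [hbdd] with x hx
    rw [Real.norm_eq_abs, abs_mul, _root_.abs_of_nonneg (hKnn x)]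
    exact mul_le_mul_of_nonneg_right hx (hKnn x)
  have hsmall := kernel_small hV hR hX hbig hRX
  -- split the integral of the norm
  have hnorm_int : Integrable (fun x => |h x * K x|) := hfint.abs
  have hsplit : ∫ x : ℝ, |h x * K x| =
      (∫ x in Icc (-X) X, |h x * K x|) + ∫ x in (Icc (-X) X)ᶜ, |h x * K x| :=
    (integral_add_compl measurableSet_Icc hnorm_int).symm
  have hnear : ∫ x in Icc (-X) X, |h x * K x| ≤ C * (2 / R) * (2 * X) := by
    have hle : ∀ᵐ x ∂(volume.restrict (Icc (-X) X)), |h x * K x| ≤ C * (2 / R) := by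
      filter_upwards [ae_restrict_of_ae hbdd, ae_restrict_mem measurableSet_Icc] with x hx hxmem
      rw [abs_mul, _root_.abs_of_nonneg (hKnn x)]
      exact mul_le_mul hx (hsmall x hxmem) (hKnn x) hC
    calc ∫ x in Icc (-X) X, |h x * K x|
        ≤ ∫ _x in Icc (-X) X, C * (2 / R) :=
          integral_mono_ae hnorm_int.integrableOn (integrableOn_const (by
            rw [Real.volume_Icc]; exact ENNReal.ofReal_ne_top)) hle
      _ = (volume (Icc (-X) X)).toReal * (C * (2 / R)) := by
          rw [setIntegral_const, smul_eq_mul, measureReal_def]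
      _ = (2 * X) * (C * (2 / R)) := by
          rw [Real.volume_Icc, ENNReal.toReal_ofReal (by linarith)]
          ring_nf
      _ = C * (2 / R) * (2 * X) := by ring
  have hfar' : ∫ x in (Icc (-X) X)ᶜ, |h x * K x| ≤ δ' * Real.pi := by
    have hle : ∀ᵐ x ∂(volume.restrict (Icc (-X) X)ᶜ), |h x * K x| ≤ δ' * K x := by
      filter_upwards [ae_restrict_mem measurableSet_Icc.compl] with x hxmem
      have hxX : X ≤ |x| := by
        simp only [mem_compl_iff, mem_Icc, not_and_or, not_le] at hxmem
        rcases hxmem with h1 | h1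
        · rw [abs_of_nonpos (by linarith)]; linarith
        · rw [_root_.abs_of_nonneg (by linarith)]; linarith
      rw [abs_mul, _root_.abs_of_nonneg (hKnn x)]
      exact mul_le_mul_of_nonneg_right (hfar x hxX) (hKnn x)
    calc ∫ x in (Icc (-X) X)ᶜ, |h x * K x|
        ≤ ∫ x in (Icc (-X) X)ᶜ, δ' * K x :=
          integral_mono_ae hnorm_int.integrableOn (hKint.const_mul δ').integrableOn hle
      _ ≤ ∫ x : ℝ, δ' * K x :=
          setIntegral_le_integral (hKint.const_mul δ')
            (Filter.Eventually.of_forall fun x => by positivity)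
      _ = δ' * Real.pi := by rw [integral_const_mul, poisson_integral U V hV]
  have hmain : |∫ x : ℝ, h x * K x| ≤ C * (2 / R) * (2 * X) + δ' * Real.pi := by
    calc |∫ x : ℝ, h x * K x| ≤ ∫ x : ℝ, |h x * K x| :=
          norm_integral_le_integral_norm (fun x => h x * K x)
      _ = _ := hsplit
      _ ≤ C * (2 / R) * (2 * X) + δ' * Real.pi := add_le_add hnear hfar'
  have hπ : (0:ℝ) < Real.pi := Real.pi_pos
  rw [abs_mul, _root_.abs_of_nonneg (by positivity : (0:ℝ) ≤ 1 / Real.pi)]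
  calc (1 / Real.pi) * |∫ x : ℝ, h x * K x|
      ≤ (1 / Real.pi) * (C * (2 / R) * (2 * X) + δ' * Real.pi) :=
        mul_le_mul_of_nonneg_left hmain (by positivity)
    _ = δ' + 4 * C * X / (Real.pi * R) := by field_simp; ring

set_option maxHeartbeats 1600000 in
/-- For fixed `λ > 0`, the integral of `H̃∘Φ` against the weight `e^{-(bu+av)}`
over the horizontal edge `E_s = {u + is : λ < bu + as ≤ s}` tends to `0` as
`s → ∞`. -/
theorem stmt_11 (a b : ℝ) (hb : 0 < b)
    (ζs : ℂ) (hζs : ζs = -(a : ℂ) / (b : ℂ) + Complex.I)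
    (γ : ℝ) (hγ : γ = Real.pi / Complex.arg ζs)
    (ε : ℝ → ℝ) (hεc : ContinuousOn ε (Icc 0 1)) (hε0 : ε 0 = 0)
    (hεnn : ∀ x ∈ Icc (0 : ℝ) 1, 0 ≤ ε x)
    (hεsm : ContDiffOn ℝ (⊤ : ℕ∞) ε (Ioc 0 1))
    (hεmono : StrictMonoOn ε (Ioc 0 1))
    (hεconc : ConcaveOn ℝ (Ioc 0 1) ε)
    (A : ℝ) (hA : 0 < A)
    (h : ℝ → ℝ)
    (hh : ∀ x : ℝ, h x =
      γ⁻¹ * A * Real.exp (-(|x| ^ (1 / γ))) * deriv ε (Real.exp (-(|x| ^ (1 / γ)))))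
    (Htilde : ℂ → ℝ)
    (hHt : ∀ Z : ℂ, 0 < Z.im →
      Htilde Z = (1 / Real.pi) * ∫ x : ℝ, h x * (Z.im / (Z.im ^ 2 + (Z.re - x) ^ 2)))
    (lam : ℝ) (hlam : 0 < lam) :
    Tendsto
      (fun s : ℝ =>
        ∫ u in {u : ℝ | lam < b * u + a * s ∧ b * u + a * s ≤ s},
          Htilde (((u : ℂ) + (s : ℂ) * Complex.I) ^ (γ : ℂ)) *
            Real.exp (-(b * u + a * s)))
      atTop (nhds 0) := by
  have hbne : (b : ℝ) ≠ 0 := ne_of_gt hb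
  have hζs' : ζs = ((-a / b : ℝ) : ℂ) + Complex.I := by rw [hζs]; push_cast; ring
  have hζsim : ζs.im = 1 := by rw [hζs']; simp
  have hθpos : 0 < ζs.arg := arg_pos_of_im_pos (by rw [hζsim]; norm_num)
  have hθpi : ζs.arg < Real.pi :=
    lt_of_le_of_ne (Complex.arg_le_pi _) (by
      intro hcon
      have h2 := Complex.arg_eq_pi_iff.1 hcon
      rw [hζsim] at h2
      exact one_ne_zero h2.2)
  have hγpos : 0 < γ := by rw [hγ]; exact div_pos Real.pi_pos hθpos
  have hγθ : γ * ζs.arg = Real.pi := by rw [hγ]; field_simp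
  have hε1 : 0 ≤ ε 1 := hεnn 1 ⟨by norm_num, le_refl 1⟩
  set C : ℝ := 2 * (γ⁻¹ * A) * ε 1 with hCdef
  have hC : 0 ≤ C := by positivity
  have hprops := h_props γ A ε h hγpos hA hεnn hεsm hεmono hεconc hh
  have hmeas := h_measurable γ A ε h hγpos hh
  have hεle1 : ∀ y ∈ Ioc (0:ℝ) 1, ε y ≤ ε 1 := by
    intro y hy
    rcases eq_or_lt_of_le hy.2 with h1 | h1
    · rw [h1]
    · exact (hεmono hy ⟨by norm_num, le_refl 1⟩ h1).le
  have hymem : ∀ x : ℝ, x ≠ 0 → Real.exp (-(|x| ^ (1 / γ))) ∈ Ioc (0:ℝ) 1 := by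
    intro x hx
    have htpos : 0 < |x| ^ (1 / γ) := Real.rpow_pos_of_pos (abs_pos.2 hx) _
    exact ⟨Real.exp_pos _, Real.exp_le_one_iff.2 (by linarith)⟩
  have hbdd : ∀ᵐ x : ℝ, |h x| ≤ C := by
    have h0 : ∀ᵐ x : ℝ, x ≠ 0 := by
      refine ae_iff.2 ?_
      have he : {x : ℝ | ¬x ≠ 0} = {0} := by ext x; simp
      rw [he]
      exact measure_singleton 0
    filter_upwards [h0] with x hx
    obtain ⟨hp1, hp2⟩ := hprops x hx
    rw [_root_.abs_of_nonneg hp1]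
    refine hp2.trans ?_
    exact mul_le_mul_of_nonneg_left (hεle1 _ (hymem x hx)) (by positivity)
  rw [Metric.tendsto_atTop]
  intro δ hδ
  set δ₁ : ℝ := δ * b * Real.exp lam / 2 with hδ₁def
  have hδ₁ : 0 < δ₁ := by rw [hδ₁def]; positivity
  have hden : (0:ℝ) < 2 * (γ⁻¹ * A) := by positivity
  obtain ⟨η, hη, hsmallε⟩ := eps_small ε hεc hε0 (δ₁ / 2 / (2 * (γ⁻¹ * A))) (by positivity)
  set T : ℝ := max 1 (1 - Real.log η) with hTdef
  have hT1 : (1:ℝ) ≤ T := le_max_left _ _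
  set X : ℝ := T ^ γ with hXdef
  have hX1 : (1:ℝ) ≤ X := by
    rw [hXdef, ← Real.one_rpow γ]
    exact Real.rpow_le_rpow (by norm_num) hT1 hγpos.le
  have hXpos : (0:ℝ) < X := lt_of_lt_of_le one_pos hX1
  have hfar : ∀ x : ℝ, X ≤ |x| → |h x| ≤ δ₁ / 2 := by
    intro x hxX
    have hx0 : x ≠ 0 := by
      intro h0; rw [h0, abs_zero] at hxX; linarith
    obtain ⟨hp1, hp2⟩ := hprops x hx0
    set y : ℝ := Real.exp (-(|x| ^ (1 / γ))) with hydef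
    have hyI := hymem x hx0
    have hTle : T ≤ |x| ^ (1 / γ) := by
      have h1 : (X : ℝ) ^ (1 / γ) ≤ |x| ^ (1 / γ) :=
        Real.rpow_le_rpow (by positivity) hxX (by positivity)
      rw [hXdef, one_div, Real.rpow_rpow_inv (by linarith) (ne_of_gt hγpos)] at h1
      rw [one_div]
      exact h1
    have hyη : y < η := by
      have h2 : 1 - Real.log η ≤ T := le_max_right _ _
      have h3 : -(|x| ^ (1 / γ)) < Real.log η := by linarith
      calc y = Real.exp (-(|x| ^ (1 / γ))) := hydef
        _ < Real.exp (Real.log η) := Real.exp_lt_exp.2 h3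
        _ = η := Real.exp_log hη
    have hεy : ε y < δ₁ / 2 / (2 * (γ⁻¹ * A)) := hsmallε y hyI.1 hyI.2 hyη
    rw [_root_.abs_of_nonneg hp1]
    calc h x ≤ 2 * (γ⁻¹ * A) * ε y := hp2
      _ ≤ 2 * (γ⁻¹ * A) * (δ₁ / 2 / (2 * (γ⁻¹ * A))) :=
          mul_le_mul_of_nonneg_left hεy.le (by positivity)
      _ = δ₁ / 2 := by field_simp
  set R₀ : ℝ := max (8 * X) (8 * C * X / (Real.pi * δ₁) + 1) with hR₀def
  have hR₀X : 8 * X ≤ R₀ := le_max_left _ _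
  have hR₀pos : 0 < R₀ := lt_of_lt_of_le (by linarith) hR₀X
  have hR₀C : 4 * C * X / (Real.pi * R₀) ≤ δ₁ / 2 := by
    have h8 : 8 * C * X / (Real.pi * δ₁) ≤ R₀ := by
      refine le_trans ?_ (le_max_right _ _)
      linarith
    have key : 8 * C * X ≤ Real.pi * δ₁ * R₀ := by
      rw [div_le_iff₀ (by positivity)] at h8
      nlinarith [Real.pi_pos]
    rw [div_le_iff₀ (by positivity)]
    nlinarith [Real.pi_pos]
  set N : ℝ := max (max 1 (lam + 1)) ((max R₀ 1) ^ γ⁻¹) with hNdef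
  refine ⟨N, fun s hs => ?_⟩
  have hs1 : (1:ℝ) ≤ s := le_trans (le_trans (le_max_left _ _) (le_max_left _ _)) hs
  have hslam : lam + 1 ≤ s := le_trans (le_trans (le_max_right _ _) (le_max_left _ _)) hs
  have hspos : 0 < s := lt_of_lt_of_le one_pos hs1
  have hsR : R₀ ≤ s ^ γ := by
    have h1 : (max R₀ 1) ^ γ⁻¹ ≤ s := le_trans (le_max_right _ _) hs
    have h2 : ((max R₀ 1) ^ γ⁻¹) ^ γ ≤ s ^ γ :=
      Real.rpow_le_rpow (by positivity) h1 hγpos.le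
    rw [Real.rpow_inv_rpow (by positivity) (ne_of_gt hγpos)] at h2
    exact le_trans (le_max_left _ _) h2
  set c : ℝ := (lam - a * s) / b with hcdef
  set d : ℝ := (s - a * s) / b with hddef
  have hcd : c ≤ d := by
    rw [hcdef, hddef, div_le_div_iff_of_pos_right hb]
    linarith
  have hEeq : {u : ℝ | lam < b * u + a * s ∧ b * u + a * s ≤ s} = Ioc c d := by
    ext u
    simp only [mem_setOf_eq, mem_Ioc, hcdef, hddef, div_lt_iff₀ hb, le_div_iff₀ hb]
    constructor <;> rintro ⟨h1, h2⟩ <;> constructor <;> nlinarith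
  have hpt : ∀ u ∈ Ioc c d,
      |Htilde (((u:ℂ) + (s:ℂ) * Complex.I) ^ (γ:ℂ))| ≤ δ₁ := by
    intro u hu
    have hw1 : lam - a * s < u * b := by
      have := hu.1
      rw [hcdef, div_lt_iff₀ hb] at this
      linarith
    set z : ℂ := (u:ℂ) + (s:ℂ) * Complex.I with hzdef
    have hzim : z.im = s := by rw [hzdef]; simp
    have hu₀ : -(a * s) / b < u := by
      rw [div_lt_iff₀ hb]
      nlinarith
    have harg1 : z.arg < ζs.arg := by
      have h1 := arg_lt_arg hspos hu₀
      have h2 : ((-(a * s) / b : ℝ) : ℂ) + (s:ℂ) * Complex.I = (s:ℂ) * ζs := by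
        rw [hζs]; push_cast; ring
      rw [h2, Complex.arg_real_mul ζs hspos] at h1
      exact h1
    have hargπ : γ * z.arg < Real.pi := by
      have h3 := (mul_lt_mul_iff_right₀ hγpos).2 harg1
      linarith [hγθ]
    have hzimpos : 0 < z.im := by rw [hzim]; exact hspos
    have hZim : 0 < (z ^ (γ:ℂ)).im := im_cpow_pos hzimpos hγpos hargπ
    have hz0 : z ≠ 0 := by
      intro h0
      rw [h0] at hzim
      simp at hzim
      exact absurd hzim.symm (ne_of_gt hspos)
    have habsz : s ≤ ‖z‖ := by
      have h1 := Complex.abs_im_le_norm z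
      rw [hzim, _root_.abs_of_pos hspos] at h1
      exact h1
    have habsZ : R₀ ≤ ‖z ^ (γ:ℂ)‖ := by
      rw [abs_cpow_real' hz0]
      calc R₀ ≤ s ^ γ := hsR
        _ ≤ ‖z‖ ^ γ := Real.rpow_le_rpow hspos.le habsz hγpos.le
    have hUV : R₀ ≤ |(z ^ (γ:ℂ)).re| + (z ^ (γ:ℂ)).im := by
      refine habsZ.trans ?_
      have h4 := Complex.norm_le_abs_re_add_abs_im (z ^ (γ:ℂ))
      rw [_root_.abs_of_pos hZim] at h4
      exact h4
    rw [hHt _ hZim]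
    refine le_trans (htilde_bound h hmeas C hC hbdd X (δ₁ / 2) hXpos (by positivity) hfar
      (z ^ (γ:ℂ)).re (z ^ (γ:ℂ)).im R₀ hZim hR₀pos hUV hR₀X) ?_
    linarith
  rw [Real.dist_eq, sub_zero, hEeq]
  have hgcont : Continuous fun u : ℝ => δ₁ * Real.exp (-(b * u + a * s)) :=
    continuous_const.mul (Real.continuous_exp.comp
      (((continuous_const.mul continuous_id).add continuous_const).neg))
  have hgint : IntegrableOn (fun u : ℝ => δ₁ * Real.exp (-(b * u + a * s))) (Ioc c d) :=
    hgcont.integrableOn_Ioc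
  have hbound : |∫ u in Ioc c d,
      Htilde (((u:ℂ) + (s:ℂ) * Complex.I) ^ (γ:ℂ)) * Real.exp (-(b * u + a * s))| ≤
      ∫ u in Ioc c d, δ₁ * Real.exp (-(b * u + a * s)) := by
    have hae : ∀ᵐ (u : ℝ) ∂(volume.restrict (Ioc c d)),
        ‖Htilde (((u:ℂ) + (s:ℂ) * Complex.I) ^ (γ:ℂ)) * Real.exp (-(b * u + a * s))‖ ≤
          δ₁ * Real.exp (-(b * u + a * s)) := by
      filter_upwards [ae_restrict_mem measurableSet_Ioc] with u hu
      rw [Real.norm_eq_abs, abs_mul, _root_.abs_of_pos (Real.exp_pos _)]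
      exact mul_le_mul_of_nonneg_right (hpt u hu) (Real.exp_pos _).le
    have := norm_integral_le_of_norm_le hgint hae
    rwa [Real.norm_eq_abs] at this
  have hval : ∫ u in Ioc c d, δ₁ * Real.exp (-(b * u + a * s)) =
      δ₁ / b * (Real.exp (-lam) - Real.exp (-s)) := by
    rw [← intervalIntegral.integral_of_le hcd]
    have hder : ∀ u ∈ uIcc c d,
        HasDerivAt (fun u : ℝ => -(δ₁ / b) * Real.exp (-(b * u + a * s)))
          (δ₁ * Real.exp (-(b * u + a * s))) u := by
      intro u _
      have h1 : HasDerivAt (fun u : ℝ => b * u + a * s) b u := by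
        simpa using ((hasDerivAt_id u).const_mul b).add_const (a * s)
      have hlin : HasDerivAt (fun u : ℝ => -(b * u + a * s)) (-b) u := h1.neg
      have hexp := hlin.exp
      have hfin := hexp.const_mul (-(δ₁ / b))
      convert hfin using 1
      case e'_9 => linear_combination (-Real.exp (-(b * u + a * s))) * (div_mul_cancel₀ δ₁ hbne)
      all_goals rfl
    rw [intervalIntegral.integral_eq_sub_of_hasDerivAt hder (hgcont.intervalIntegrable c d)]
    have hbc : b * c + a * s = lam := by rw [hcdef]; field_simp; ring
    have hbd : b * d + a * s = s := by rw [hddef]; field_simp; ring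
    simp only [hbd, hbc]
    ring
  have hfinal : δ₁ / b * (Real.exp (-lam) - Real.exp (-s)) ≤ δ / 2 := by
    have h1 : (0:ℝ) < Real.exp (-s) := Real.exp_pos _
    have h2 : δ₁ / b * Real.exp (-lam) = δ / 2 := by
      rw [hδ₁def, Real.exp_neg]
      field_simp
    nlinarith [div_pos hδ₁ hb]
  calc |∫ u in Ioc c d,
      Htilde (((u:ℂ) + (s:ℂ) * Complex.I) ^ (γ:ℂ)) * Real.exp (-(b * u + a * s))|
      ≤ ∫ u in Ioc c d, δ₁ * Real.exp (-(b * u + a * s)) := hbound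
    _ = δ₁ / b * (Real.exp (-lam) - Real.exp (-s)) := hval
    _ ≤ δ / 2 := hfinal
    _ < δ := by linarith
end
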